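/- arXiv:2106.01180 — 2 statements merged into one kernel-verified Lean document; each statement's English description precedes it below -/
import Mathlib

section
/- As h → 0⁺, the unique positive solution β_c(h) of β² = 2·r(tanh(βh)) satisfies β_c(h) = √(2 ln 2)·(1 − h²/2) + O(h⁴). -/
open Real Asymptotics

/-- The modified binary entropy. -/
noncomputable def modEntropy (y : ℝ) : ℝ :=
  -((1 - y) / 2 * Real.log ((1 - y) / 2)) - (1 + y) / 2 * Real.log ((1 + y) / 2)

/-!
Since `r(y)` is the binary entropy of `(1 + y) / 2`, `r ≤ ln 2` and the critical `β` stays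
bounded, so `t = tanh (β h) = β h + O(h³)` and `r(t) = ln 2 - t² / 2 + O(t⁴)` turn the critical
equation into `β² (1 + h²) = 2 ln 2 + O(h⁴)`.
Solving for `β` gives the claim, because `(1 + h²)^(-1/2) = 1 - h² / 2 + O(h⁴)`.
-/

open Filter Topology

namespace Real

theorem hasDerivAt_tanh (x : ℝ) : HasDerivAt tanh (1 - tanh x ^ 2) x := by
  have h := (hasDerivAt_sinh x).div (hasDerivAt_cosh x) (cosh_pos x).ne'
  rw [show sinh / cosh = tanh from funext fun y => (tanh_eq_sinh_div_cosh y).symm] at h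
  refine h.congr_deriv ?_
  rw [tanh_eq_sinh_div_cosh]
  field_simp

theorem abs_tanh_le_abs (x : ℝ) : |tanh x| ≤ |x| := by
  simpa using (convex_univ (𝕜 := ℝ)).norm_image_sub_le_of_norm_hasDerivWithin_le
    (fun t _ => (hasDerivAt_tanh t).hasDerivWithinAt) (C := 1)
    (fun t _ => by
      have := tanh_sq_lt_one t
      rw [norm_eq_abs, abs_le]
      constructor <;> nlinarith [sq_nonneg (tanh t)])
    (Set.mem_univ 0) (Set.mem_univ x)

theorem abs_tanh_sub_self_le (x : ℝ) : |tanh x - x| ≤ |x| ^ 3 := by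
  have hderiv (t : ℝ) : HasDerivAt (fun t => tanh t - t) (-tanh t ^ 2) t :=
    ((hasDerivAt_tanh t).sub (hasDerivAt_id t)).congr_deriv (by ring)
  have hbound : ∀ t ∈ Set.Icc (-|x|) |x|, ‖-tanh t ^ 2‖ ≤ |x| ^ 2 := fun t ht => by
    rw [norm_neg, norm_pow, norm_eq_abs]
    exact pow_le_pow_left₀ (abs_nonneg _) ((abs_tanh_le_abs t).trans (abs_le.mpr ht)) 2
  have := (convex_Icc (-|x|) |x|).norm_image_sub_le_of_norm_hasDerivWithin_le
    (fun t _ => (hderiv t).hasDerivWithinAt) hbound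
    ⟨neg_nonpos.mpr (abs_nonneg x), abs_nonneg x⟩ ⟨neg_abs_le x, le_abs_self x⟩
  simpa [pow_succ] using this

theorem isBigO_tanh_sub_self : (fun x => tanh x - x) =O[𝓝 0] (· ^ 3) :=
  IsBigO.of_bound 1 <| Eventually.of_forall fun x => by
    simpa [norm_eq_abs, abs_pow] using abs_tanh_sub_self_le x

theorem isBigO_sum_range_add_log_one_sub (n : ℕ) :
    (fun x : ℝ => ∑ i ∈ Finset.range n, x ^ (i + 1) / (i + 1) + log (1 - x))
      =O[𝓝 0] (fun x : ℝ => x ^ (n + 1)) := by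
  refine IsBigO.of_bound 2 ?_
  filter_upwards [eventually_abs_sub_lt 0 (by norm_num : (0:ℝ) < 1 / 2)] with x hx
  rw [sub_zero] at hx
  rw [norm_eq_abs, norm_eq_abs, abs_pow]
  refine (abs_log_sub_add_sum_range_le (by linarith) n).trans ?_
  rw [div_le_iff₀ (by linarith)]
  nlinarith [pow_nonneg (abs_nonneg x) (n + 1)]

end Real

theorem modEntropy_eq_binEntropy (y : ℝ) : modEntropy y = binEntropy ((1 + y) / 2) := by
  rw [modEntropy, binEntropy, log_inv, log_inv,
    show 1 - (1 + y) / 2 = (1 - y) / 2 by ring]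
  ring

theorem modEntropy_le_log_two (y : ℝ) : modEntropy y ≤ log 2 :=
  modEntropy_eq_binEntropy y ▸ binEntropy_le_log_two

theorem isBigO_modEntropy_sub :
    (fun y => modEntropy y - (log 2 - y ^ 2 / 2)) =O[𝓝 0] (fun y : ℝ => y ^ 4) := by
  set e : ℝ → ℝ := fun x => ∑ i ∈ Finset.range 3, x ^ (i + 1) / (i + 1) + log (1 - x)
  have he : e =O[𝓝 0] (fun y : ℝ => y ^ 4) := isBigO_sum_range_add_log_one_sub 3
  have he_neg : (fun y => e (-y)) =O[𝓝 0] (fun y : ℝ => y ^ 4) := by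
    refine (he.comp_tendsto (continuous_neg.tendsto' 0 0 neg_zero)).congr
      (fun _ => rfl) (fun y => ?_)
    simp only [Function.comp_apply]
    ring
  have hbdd (c : ℝ → ℝ) (hc : Continuous c) : c =O[𝓝 0] (fun _ => (1 : ℝ)) :=
    (hc.tendsto 0).isBigO_one ℝ
  have hexp : (fun y => modEntropy y - (log 2 - y ^ 2 / 2)) =ᶠ[𝓝 0]
      fun y => -(1 - y) / 2 * e y + -(1 + y) / 2 * e (-y) - 1 / 3 * y ^ 4 := by
    filter_upwards [eventually_abs_sub_lt 0 one_pos] with y hy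
    rw [sub_zero, abs_lt] at hy
    simp only [e, modEntropy, Finset.sum_range_succ, Finset.sum_range_zero, sub_neg_eq_add]
    rw [log_div (by linarith) two_ne_zero, log_div (by linarith) two_ne_zero]
    ring
  have hmain := ((hbdd (fun y => -(1 - y) / 2) (by fun_prop)).mul he).add
    ((hbdd (fun y => -(1 + y) / 2) (by fun_prop)).mul he_neg)
  simp only [one_mul] at hmain
  exact (hmain.sub ((isBigO_refl _ _).const_mul_left _)).congr' hexp.symm EventuallyEq.rfl

theorem isBigO_sq_mul_one_add_sq_sub_log_two {l : Filter ℝ} (hl : l ≤ 𝓝 0) {β : ℝ → ℝ}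
    (hβ : β =O[l] (fun _ => (1 : ℝ)))
    (hcrit : ∀ᶠ h in l, β h ^ 2 = 2 * modEntropy (tanh (β h * h))) :
    (fun h => β h ^ 2 * (1 + h ^ 2) - 2 * log 2) =O[l] (fun h => h ^ 4) := by
  have hid : Tendsto (fun h => h) l (𝓝 0) := tendsto_id'.mpr hl
  have hβh : (fun h => β h * h) =O[l] (fun h => h) := by
    simpa using hβ.mul (isBigO_refl (fun h => h) l)
  have ht : (fun h => tanh (β h * h)) =O[l] (fun h => h) :=
    (IsBigO.of_bound 1 (Eventually.of_forall fun h => by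
      simpa using abs_tanh_le_abs (β h * h))).trans hβh
  have htanh : (fun h => tanh (β h * h) - β h * h) =O[l] (fun h => h ^ 3) :=
    (isBigO_tanh_sub_self.comp_tendsto (hβh.trans_tendsto hid)).trans (hβh.pow 3)
  have hent : (fun h => modEntropy (tanh (β h * h)) - (log 2 - tanh (β h * h) ^ 2 / 2))
      =O[l] (fun h => h ^ 4) :=
    (isBigO_modEntropy_sub.comp_tendsto (ht.trans_tendsto hid)).trans (ht.pow 4)
  have hsq := htanh.mul (ht.add hβh)
  simp only [← pow_succ] at hsq
  refine ((hent.const_mul_left 2).sub hsq).congr' ?_ EventuallyEq.rfl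
  filter_upwards [hcrit] with h hh
  linear_combination (-1) * hh

theorem isBigO_sub_mul_one_sub_sq_div_two {l : Filter ℝ} (hl : l ≤ 𝓝 0) {β : ℝ → ℝ} {c : ℝ}
    (hc : 0 < c) (hβ : ∀ᶠ h in l, 0 ≤ β h)
    (H : (fun h => β h ^ 2 * (1 + h ^ 2) - c ^ 2) =O[l] (fun h => h ^ 4)) :
    (fun h => β h - c * (1 - h ^ 2 / 2)) =O[l] (fun h => h ^ 4) := by
  set D : ℝ → ℝ := fun h => (1 + h ^ 2) * (β h + c * (1 - h ^ 2 / 2))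
  have hsmall : ∀ᶠ h in l, |h| < 1 := by
    simpa using (eventually_abs_sub_lt 0 one_pos).filter_mono hl
  have hD : ∀ᶠ h in l, c / 2 ≤ D h := by
    filter_upwards [hsmall, hβ] with h hh hβh
    have : h ^ 2 ≤ 1 := by nlinarith [abs_nonneg h, sq_abs h]
    have : c / 2 ≤ β h + c * (1 - h ^ 2 / 2) := by nlinarith
    exact this.trans (le_mul_of_one_le_left (by linarith) (by nlinarith))
  have hDinv : (fun h => (D h)⁻¹) =O[l] (fun _ => (1 : ℝ)) := by
    refine IsBigO.of_bound (c / 2)⁻¹ ?_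
    filter_upwards [hD] with h hh
    rw [norm_one, mul_one, norm_inv, norm_of_nonneg (by linarith)]
    exact inv_anti₀ (by positivity) hh
  have hrest : (fun h => c ^ 2 * (3 - h ^ 2) / 4 * h ^ 4) =O[l] (fun h => h ^ 4) := by
    simpa using (((Continuous.tendsto (by fun_prop) 0).mono_left hl).isBigO_one ℝ
      (f' := fun h : ℝ => c ^ 2 * (3 - h ^ 2) / 4)).mul (isBigO_refl (fun h : ℝ => h ^ 4) l)
  -- `(1 + h²) (1 - h²/2)² = 1 - (3 - h²) h⁴ / 4`
  have hmain := (H.add hrest).mul hDinv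
  simp only [mul_one] at hmain
  refine hmain.congr' ?_ EventuallyEq.rfl
  filter_upwards [hD] with h hh
  have : D h ≠ 0 := by linarith
  field_simp
  simp only [D]
  ring

/-- As `h → 0⁺`, the unique positive solution `β_c(h)` of `β² = 2 r(tanh(βh))` satisfies
`β_c(h) = √(2 ln 2)·(1 − h²/2) + O(h⁴)`. -/
theorem critical_beta_small_field (βc : ℝ → ℝ)
    (hβc : ∀ h : ℝ, 0 ≤ h →
      0 < βc h ∧ (βc h) ^ 2 = 2 * modEntropy (Real.tanh (βc h * h))) :
    (fun h : ℝ => βc h - Real.sqrt (2 * Real.log 2) * (1 - h ^ 2 / 2))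
      =O[nhdsWithin 0 (Set.Ioi 0)] (fun h : ℝ => h ^ 4) := by
  have hl : 𝓝[>] (0 : ℝ) ≤ 𝓝 0 := nhdsWithin_le_nhds
  have hβ : ∀ᶠ h in 𝓝[>] (0 : ℝ), 0 < βc h ∧ βc h ^ 2 = 2 * modEntropy (tanh (βc h * h)) :=
    eventually_nhdsWithin_of_forall fun h hh => hβc h (le_of_lt hh)
  have hlog : 0 < 2 * log 2 := by positivity
  have hbdd : βc =O[𝓝[>] 0] (fun _ => (1 : ℝ)) := by
    refine IsBigO.of_bound √(2 * log 2) (hβ.mono fun h hh => ?_)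
    simpa using abs_le_sqrt (show βc h ^ 2 ≤ 2 * log 2 by
      linarith [hh.2, modEntropy_le_log_two (tanh (βc h * h))])
  refine isBigO_sub_mul_one_sub_sq_div_two hl (sqrt_pos.2 hlog) (hβ.mono fun _ hh => hh.1.le) ?_
  rw [sq_sqrt hlog.le]
  exact isBigO_sq_mul_one_add_sq_sub_log_two hl hbdd (hβ.mono fun _ hh => hh.2)
end

section
/- Let 𝔥 be an absolutely integrable real random variable and a > 0 a constant. Then for each fixed a > 0 the equation (a/2)·β² = ln 2 + E[ln cosh(β𝔥)] − β·E[𝔥·tanh(β𝔥)] has a unique positive solution β_c, and β_c is a decreasing function of a. -/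
/-!
Write `H(y) = log 2 + log cosh y − y tanh y`. This is the binary entropy of `σ(2y)`, the
probability of the value `+1` for a spin `σ = ±1` with Gibbs weight `exp (σ y)`; hence
`0 ≤ H ≤ log 2`, `H` is even, and it decreases in `|y|` because `σ(2|y|) ≥ 1/2` grows with `|y|`.
The right-hand side of the equation is therefore `Φ(β) = E[H(β𝔥)]`, a continuous function that
is antitone on `β ≥ 0` with `Φ(0) = log 2 > 0`, while `(a/2) β²` is strictly increasing from `0`.
The intermediate value theorem gives a positive solution, and comparing a strictly increasing
with an antitone function gives uniqueness and, since `(a/2) β²` increases with `a`, that the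
solution decreases in `a`.
-/

open Real MeasureTheory Set

namespace Real

lemma continuous_tanh : Continuous tanh :=
  (continuous_sinh.div continuous_cosh fun y => (cosh_pos y).ne').congr fun y =>
    (tanh_eq_sinh_div_cosh y).symm

lemma sigmoid_two_mul (y : ℝ) : sigmoid (2 * y) = exp y / (2 * cosh y) := by
  rw [sigmoid_def, cosh_eq, mul_div_cancel₀ _ two_ne_zero, eq_div_iff (by positivity),
    mul_comm, ← div_eq_mul_inv, div_eq_iff (by positivity), mul_add, ← exp_add,
    show y + -(2 * y) = -y by ring, mul_one]

lemma binEntropy_sigmoid_two_mul (y : ℝ) :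
    binEntropy (sigmoid (2 * y)) = log 2 + log (cosh y) - y * tanh y := by
  have hc : 0 < 2 * cosh y := by positivity
  have hq : 1 - sigmoid (2 * y) = exp (-y) / (2 * cosh y) := by
    rw [← sigmoid_neg, ← mul_neg, sigmoid_two_mul, cosh_neg]
  have hlog (t : ℝ) : log (exp t / (2 * cosh y))⁻¹ = log 2 + log (cosh y) - t := by
    rw [inv_div, log_div hc.ne' (exp_pos t).ne', log_exp, log_mul two_ne_zero (cosh_pos y).ne']
  rw [binEntropy, hq, sigmoid_two_mul, hlog, hlog, tanh_eq_sinh_div_cosh, sinh_eq]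
  field_simp
  rw [cosh_eq]
  ring

lemma binEntropy_sigmoid_abs (t : ℝ) : binEntropy (sigmoid |t|) = binEntropy (sigmoid t) := by
  rcases abs_choice t with h | h <;> rw [h]
  rw [sigmoid_neg, binEntropy_one_sub]

lemma binEntropy_sigmoid_le_of_abs_le {s t : ℝ} (h : |s| ≤ |t|) :
    binEntropy (sigmoid t) ≤ binEntropy (sigmoid s) := by
  have mem (u : ℝ) : sigmoid |u| ∈ Icc 2⁻¹ 1 :=
    ⟨sigmoid_zero ▸ sigmoid_le (abs_nonneg u), sigmoid_le_one _⟩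
  rw [← binEntropy_sigmoid_abs s, ← binEntropy_sigmoid_abs t]
  exact binEntropy_strictAntiOn.antitoneOn (mem s) (mem t) (sigmoid_le h)

lemma abs_binEntropy_sigmoid_le (t : ℝ) : |binEntropy (sigmoid t)| ≤ log 2 :=
  abs_le.2 ⟨(neg_nonpos.2 (log_nonneg one_le_two)).trans
    (binEntropy_nonneg (sigmoid_nonneg t) (sigmoid_le_one t)), binEntropy_le_log_two⟩

end Real

section RandomField

variable {Ω : Type*} [MeasurableSpace Ω] {μ : Measure Ω} {h : Ω → ℝ}

noncomputable def meanSpinEntropy (μ : Measure Ω) (h : Ω → ℝ) (β : ℝ) : ℝ :=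
  ∫ ω, binEntropy (sigmoid (2 * (β * h ω))) ∂μ

lemma integrable_binEntropy_sigmoid [IsFiniteMeasure μ] (hh : AEStronglyMeasurable h μ)
    (β : ℝ) : Integrable (fun ω => binEntropy (sigmoid (2 * (β * h ω)))) μ :=
  (integrable_const (log 2)).mono
    ((binEntropy_continuous.comp continuous_sigmoid).comp_aestronglyMeasurable
      ((hh.const_mul β).const_mul 2))
    (.of_forall fun ω => by
      rw [norm_eq_abs, norm_eq_abs, abs_of_nonneg (log_nonneg one_le_two)]
      exact abs_binEntropy_sigmoid_le _)

lemma continuous_meanSpinEntropy [IsFiniteMeasure μ] (hh : AEStronglyMeasurable h μ) :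
    Continuous (meanSpinEntropy μ h) :=
  continuous_of_dominated (fun β => (integrable_binEntropy_sigmoid hh β).1)
    (fun _ => .of_forall fun _ => abs_binEntropy_sigmoid_le _) (integrable_const _)
    (.of_forall fun _ => by fun_prop)

lemma antitoneOn_meanSpinEntropy [IsFiniteMeasure μ] (hh : AEStronglyMeasurable h μ) :
    AntitoneOn (meanSpinEntropy μ h) (Ici 0) := fun β₁ hβ₁ β₂ _ hβ =>
  integral_mono (integrable_binEntropy_sigmoid hh β₂) (integrable_binEntropy_sigmoid hh β₁)
    fun ω => binEntropy_sigmoid_le_of_abs_le <| by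
      rw [mem_Ici] at hβ₁
      simp only [abs_mul, abs_of_nonneg hβ₁, abs_of_nonneg (hβ₁.trans hβ)]
      gcongr

@[simp]
lemma meanSpinEntropy_zero [IsProbabilityMeasure μ] : meanSpinEntropy μ h 0 = log 2 := by
  simp [meanSpinEntropy]

lemma meanSpinEntropy_eq [IsProbabilityMeasure μ] (hh : Integrable h μ) (β : ℝ) :
    meanSpinEntropy μ h β =
      log 2 + (∫ ω, log (cosh (β * h ω)) ∂μ) - β * ∫ ω, h ω * tanh (β * h ω) ∂μ := by
  have hT : Integrable (fun ω => h ω * tanh (β * h ω)) μ :=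
    hh.mul_bdd (continuous_tanh.comp_aestronglyMeasurable (hh.1.const_mul β))
      (.of_forall fun _ => (abs_tanh_lt_one _).le)
  have hH := integrable_binEntropy_sigmoid hh.1 β
  have hH' : Integrable (fun ω => binEntropy (sigmoid (2 * (β * h ω))) - log 2) μ :=
    hH.sub (integrable_const _)
  have hlogcosh : (fun ω => log (cosh (β * h ω))) = fun ω =>
      binEntropy (sigmoid (2 * (β * h ω))) - log 2 + β * (h ω * tanh (β * h ω)) := by
    funext ω
    rw [binEntropy_sigmoid_two_mul]
    ring
  rw [hlogcosh, integral_add hH' (hT.const_mul β), integral_sub hH (integrable_const _),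
    integral_const_mul, integral_const, probReal_univ, one_smul, meanSpinEntropy]
  ring

end RandomField

lemma StrictMonoOn.le_of_antitoneOn {f g : ℝ → ℝ} {s : Set ℝ} (hf : StrictMonoOn f s)
    (hg : AntitoneOn g s) {x y : ℝ} (hx : x ∈ s) (hy : y ∈ s) (hgx : g x ≤ f x)
    (hfy : f y ≤ g y) : y ≤ x := by
  by_contra! hxy
  exact (hf hx hy hxy).not_ge (hfy.trans ((hg hx hy hxy.le).trans hgx))

lemma strictMonoOn_const_mul_sq {c : ℝ} (hc : 0 < c) :
    StrictMonoOn (fun x : ℝ => c * x ^ 2) (Ici 0) := fun _ hx _ _ hxy =>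
  mul_lt_mul_of_pos_left (pow_lt_pow_left₀ hxy hx two_ne_zero) hc

lemma exists_unique_pos_half_mul_sq_eq {g : ℝ → ℝ} (hg : ContinuousOn g (Ici 0))
    (hanti : AntitoneOn g (Ici 0)) (hg0 : 0 < g 0) {a : ℝ} (ha : 0 < a) :
    ∃! β : ℝ, 0 < β ∧ a / 2 * β ^ 2 = g β := by
  have hmono := strictMonoOn_const_mul_sq (half_pos ha)
  -- `M` balances the left-hand side against the largest value `g 0` of the right-hand side.
  set M := √(2 * g 0 / a)
  have hM : a / 2 * M ^ 2 = g 0 := by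
    rw [sq_sqrt (by positivity)]
    field_simp
  obtain ⟨β, hβ, hroot⟩ : ∃ β ∈ Icc 0 M, a / 2 * β ^ 2 - g β = 0 := by
    refine intermediate_value_Icc (sqrt_nonneg _) ?_ ⟨?_, ?_⟩
    · exact (continuousOn_const.mul (continuousOn_id.pow 2)).sub (hg.mono Icc_subset_Ici_self)
    · simpa using hg0.le
    · show 0 ≤ a / 2 * M ^ 2 - g M
      rw [hM, sub_nonneg]
      exact hanti self_mem_Ici (sqrt_nonneg _) (sqrt_nonneg _)
  have hβ0 : β ≠ 0 := by rintro rfl; simp [hg0.ne'] at hroot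
  have hβeq : a / 2 * β ^ 2 = g β := sub_eq_zero.1 hroot
  refine ⟨β, ⟨lt_of_le_of_ne hβ.1 (Ne.symm hβ0), hβeq⟩, fun γ ⟨hγ, hγeq⟩ => ?_⟩
  exact le_antisymm (hmono.le_of_antitoneOn hanti hβ.1 hγ.le hβeq.ge hγeq.le)
    (hmono.le_of_antitoneOn hanti hγ.le hβ.1 hγeq.ge hβeq.le)

/-- For an absolutely integrable random variable `𝔥` and each `a > 0`, the equation
`(a/2)·β² = ln 2 + E[ln cosh(β𝔥)] − β·E[𝔥·tanh(β𝔥)]` has a unique positive solution `β_c`,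
and this solution is a decreasing function of `a`. -/
theorem exists_unique_critical_beta_random_field
    {Ω : Type*} [MeasureSpace Ω] [IsProbabilityMeasure (volume : Measure Ω)]
    (𝔥 : Ω → ℝ) (h𝔥 : Integrable 𝔥) :
    (∀ a : ℝ, 0 < a → ∃! β : ℝ, 0 < β ∧
      a / 2 * β ^ 2 =
        Real.log 2 + (∫ ω, Real.log (Real.cosh (β * 𝔥 ω)))
          - β * ∫ ω, 𝔥 ω * Real.tanh (β * 𝔥 ω)) ∧
    (∀ a a' βa βa' : ℝ, 0 < a → a ≤ a' →
      (0 < βa ∧ a / 2 * βa ^ 2 =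
        Real.log 2 + (∫ ω, Real.log (Real.cosh (βa * 𝔥 ω)))
          - βa * ∫ ω, 𝔥 ω * Real.tanh (βa * 𝔥 ω)) →
      (0 < βa' ∧ a' / 2 * βa' ^ 2 =
        Real.log 2 + (∫ ω, Real.log (Real.cosh (βa' * 𝔥 ω)))
          - βa' * ∫ ω, 𝔥 ω * Real.tanh (βa' * 𝔥 ω)) →
      βa' ≤ βa) := by
  simp only [← meanSpinEntropy_eq h𝔥]
  have hanti := antitoneOn_meanSpinEntropy h𝔥.1
  refine ⟨fun a ha => exists_unique_pos_half_mul_sq_eq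
    (continuous_meanSpinEntropy h𝔥.1).continuousOn hanti (by simp [log_pos]) ha, ?_⟩
  rintro a a' βa βa' ha haa' ⟨hβa, hβa_eq⟩ ⟨hβa', hβa'_eq⟩
  refine (strictMonoOn_const_mul_sq (half_pos ha)).le_of_antitoneOn hanti hβa.le hβa'.le
    hβa_eq.ge ?_
  rw [← hβa'_eq]
  gcongr
end
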